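/- With the setup of the variant monomial crystal M_c restricted to one index (f̃(y) subtracts 1 at positions n_f, n_f+1 when φ(y) > 0; ẽ(y) adds 1 at positions n_e, n_e+1 when ε(y) > 0, where n_e = max{n : ∑_{k≤n} y(k) = φ(y)}): if φ(y) > 0 then ẽ(f̃(y)) = y, and if ε(y) > 0 then f̃(ẽ(y)) = y. -/
import Mathlib


open Finset

/-- Partial sum `∑_{k ≤ n} y k` of a finitely supported `y : ℤ → ℤ`. -/
def psum (y : ℤ →₀ ℤ) (n : ℤ) : ℤ := ∑ k ∈ y.support.filter (fun k => k ≤ n), y k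

/-- Tail sum `∑_{k > n} y k`. -/
def tgt (y : ℤ →₀ ℤ) (n : ℤ) : ℤ := ∑ k ∈ y.support.filter (fun k => n < k), y k

/-- Tail sum `∑_{k ≥ n} y k`. -/
def tge (y : ℤ →₀ ℤ) (n : ℤ) : ℤ := ∑ k ∈ y.support.filter (fun k => n ≤ k), y k

/-- Total weight `∑_n y n`. -/
def wt (y : ℤ →₀ ℤ) : ℤ := ∑ k ∈ y.support, y k

/-- `φ(y) = max {∑_{k ≤ n} y k : n ∈ ℤ}` (the set is finite and nonempty). -/
noncomputable def phi (y : ℤ →₀ ℤ) : ℤ := sSup (Set.range (psum y))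

/-- `ε(y) = max {−∑_{k > n} y k : n ∈ ℤ}` (the set is finite and nonempty). -/
noncomputable def eps (y : ℤ →₀ ℤ) : ℤ := sSup (Set.range (fun n => - tgt y n))

/-- `n_f = min {n : ∑_{k ≤ n} y k = φ(y)}`. -/
noncomputable def nfPos (y : ℤ →₀ ℤ) : ℤ := sInf {n | psum y n = phi y}

/-- `n_e = max {n : ∑_{k ≤ n} y k = φ(y)}` (variant monomial crystal convention). -/
noncomputable def nePos (y : ℤ →₀ ℤ) : ℤ := sSup {n | psum y n = phi y}

/-- Variant monomial operator `f̃`: subtract 1 at positions `n_f` and `n_f + 1`. -/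
noncomputable def ftil (y : ℤ →₀ ℤ) : ℤ →₀ ℤ :=
  y - Finsupp.single (nfPos y) 1 - Finsupp.single (nfPos y + 1) 1

/-- Variant monomial operator `ẽ`: add 1 at positions `n_e` and `n_e + 1`. -/
noncomputable def etil (y : ℤ →₀ ℤ) : ℤ →₀ ℤ :=
  y + Finsupp.single (nePos y) 1 + Finsupp.single (nePos y + 1) 1

lemma psum_eq_sum (y : ℤ →₀ ℤ) (s : Finset ℤ) (hs : y.support ⊆ s) (n : ℤ) :
    psum y n = ∑ k ∈ s.filter (fun k => k ≤ n), y k := by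
  refine Finset.sum_subset (Finset.filter_subset_filter _ hs) ?_
  intro x hx hx2
  by_contra h
  exact hx2 (Finset.mem_filter.mpr ⟨Finsupp.mem_support_iff.mpr h, (Finset.mem_filter.mp hx).2⟩)

lemma psum_add (y z : ℤ →₀ ℤ) (n : ℤ) : psum (y + z) n = psum y n + psum z n := by
  classical
  rw [psum_eq_sum (y + z) (y.support ∪ z.support) Finsupp.support_add,
    psum_eq_sum y (y.support ∪ z.support) Finset.subset_union_left,
    psum_eq_sum z (y.support ∪ z.support) Finset.subset_union_right,
    ← Finset.sum_add_distrib]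
  simp

lemma psum_neg (y : ℤ →₀ ℤ) (n : ℤ) : psum (-y) n = - psum y n := by
  unfold psum
  rw [Finsupp.support_neg, ← Finset.sum_neg_distrib]
  simp

lemma psum_sub (y z : ℤ →₀ ℤ) (n : ℤ) : psum (y - z) n = psum y n - psum z n := by
  rw [sub_eq_add_neg, psum_add, psum_neg, sub_eq_add_neg]

lemma psum_single (a c n : ℤ) : psum (Finsupp.single a c) n = if a ≤ n then c else 0 := by
  classical
  rw [psum_eq_sum _ {a} Finsupp.support_single_subset, Finset.filter_singleton]
  split_ifs with h
  · rw [Finset.sum_singleton, Finsupp.single_eq_same]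
  · rfl

lemma psum_add_tgt (y : ℤ →₀ ℤ) (n : ℤ) : psum y n + tgt y n = wt y := by
  classical
  unfold psum tgt wt
  have h : y.support.filter (fun x => ¬ x ≤ n) = y.support.filter (fun k => n < k) := by
    apply Finset.filter_congr
    intro x _
    simp [not_le]
  rw [← Finset.sum_filter_add_sum_filter_not y.support (fun k => k ≤ n), h]

lemma range_psum_finite (y : ℤ →₀ ℤ) : (Set.range (psum y)).Finite := by
  classical
  apply Set.Finite.subset (Finset.finite_toSet (insert 0 (y.support.image (psum y))))
  rintro x ⟨n, rfl⟩
  by_cases h : (y.support.filter (fun k => k ≤ n)).Nonempty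
  · obtain ⟨m, hm, hmax⟩ : ∃ m ∈ y.support, m ≤ n ∧
        ∀ k ∈ y.support, k ≤ n → k ≤ m := by
      obtain ⟨m, hm_mem, hmax⟩ := Finset.exists_max_image (y.support.filter (fun k => k ≤ n)) id h
      rw [Finset.mem_filter] at hm_mem
      exact ⟨m, hm_mem.1, hm_mem.2, fun k hk hkn => hmax k (Finset.mem_filter.mpr ⟨hk, hkn⟩)⟩
    have hfe : y.support.filter (fun k => k ≤ n) = y.support.filter (fun k => k ≤ m) := by
      ext k
      simp only [Finset.mem_filter]
      exact ⟨fun ⟨hk, hkn⟩ => ⟨hk, hmax.2 k hk hkn⟩, fun ⟨hk, hkm⟩ => ⟨hk, hkm.trans hmax.1⟩⟩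
    have : psum y n = psum y m := by unfold psum; rw [hfe]
    rw [this]
    simp only [Finset.coe_insert, Set.mem_insert_iff, Finset.coe_image, Set.mem_image]
    exact Or.inr ⟨m, hm, rfl⟩
  · rw [Finset.not_nonempty_iff_eq_empty] at h
    simp [psum, h]

lemma psum_le_phi (y : ℤ →₀ ℤ) (n : ℤ) : psum y n ≤ phi y :=
  le_csSup (range_psum_finite y).bddAbove ⟨n, rfl⟩

lemma phi_mem (y : ℤ →₀ ℤ) : ∃ m, psum y m = phi y := by
  obtain ⟨m, hm⟩ := Set.Nonempty.csSup_mem (⟨psum y 0, 0, rfl⟩ : (Set.range (psum y)).Nonempty)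
    (range_psum_finite y)
  exact ⟨m, hm⟩

lemma exists_lt_support (y : ℤ →₀ ℤ) : ∃ a : ℤ, ∀ k ∈ y.support, a < k := by
  obtain ⟨a, ha⟩ := y.support.bddBelow
  exact ⟨a - 1, fun k hk => lt_of_lt_of_le (by omega) (ha hk)⟩

lemma exists_ge_support (y : ℤ →₀ ℤ) : ∃ b : ℤ, ∀ k ∈ y.support, k ≤ b := by
  obtain ⟨b, hb⟩ := y.support.bddAbove
  exact ⟨b, fun k hk => hb hk⟩

lemma psum_of_forall_lt (y : ℤ →₀ ℤ) (n : ℤ) (h : ∀ k ∈ y.support, n < k) : psum y n = 0 := by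
  unfold psum
  rw [Finset.filter_false_of_mem, Finset.sum_empty]
  intro k hk
  exact not_le.mpr (h k hk)

lemma psum_of_forall_le (y : ℤ →₀ ℤ) (n : ℤ) (h : ∀ k ∈ y.support, k ≤ n) : psum y n = wt y := by
  unfold psum wt
  congr 1
  exact Finset.filter_true_of_mem h

lemma phi_nonneg (y : ℤ →₀ ℤ) : 0 ≤ phi y := by
  obtain ⟨a, ha⟩ := exists_lt_support y
  have := psum_le_phi y a
  rw [psum_of_forall_lt y a ha] at this
  exact this

lemma wt_le_phi (y : ℤ →₀ ℤ) : wt y ≤ phi y := by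
  obtain ⟨b, hb⟩ := exists_ge_support y
  have := psum_le_phi y b
  rwa [psum_of_forall_le y b hb] at this

lemma eps_eq (y : ℤ →₀ ℤ) : eps y = phi y - wt y := by
  have key : ∀ n, -tgt y n = psum y n - wt y := by
    intro n; have := psum_add_tgt y n; omega
  have hbdd : BddAbove (Set.range fun n => -tgt y n) := by
    refine ⟨phi y - wt y, ?_⟩
    rintro x ⟨n, rfl⟩
    have := psum_le_phi y n
    show -tgt y n ≤ _
    rw [key]; omega
  apply le_antisymm
  · apply csSup_le (⟨-tgt y 0, 0, rfl⟩ : (Set.range fun n => -tgt y n).Nonempty)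
    rintro x ⟨n, rfl⟩
    have := psum_le_phi y n
    show -tgt y n ≤ _
    rw [key]; omega
  · obtain ⟨m, hm⟩ := phi_mem y
    have : phi y - wt y = -tgt y m := by rw [key, hm]
    rw [this]
    exact le_csSup hbdd ⟨m, rfl⟩

lemma phi_eq_of (y : ℤ →₀ ℤ) (v m : ℤ) (hm : psum y m = v) (hub : ∀ n, psum y n ≤ v) :
    phi y = v := by
  apply le_antisymm
  · apply csSup_le (⟨psum y 0, 0, rfl⟩ : (Set.range (psum y)).Nonempty)
    rintro x ⟨n, rfl⟩; exact hub n
  · rw [← hm]; exact psum_le_phi y m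

lemma nePos_eq_of (y : ℤ →₀ ℤ) (v m : ℤ) (hm : psum y m = v) (hub : ∀ n, psum y n ≤ v)
    (hlt : ∀ n, m < n → psum y n < v) : nePos y = m := by
  have hphi := phi_eq_of y v m hm hub
  have hbdd : ∀ n ∈ {n | psum y n = v}, n ≤ m := by
    intro n hn
    by_contra hc
    push_neg at hc
    exact absurd hn (ne_of_lt (hlt n hc))
  unfold nePos
  rw [hphi]
  exact le_antisymm (csSup_le ⟨m, hm⟩ hbdd) (le_csSup ⟨m, hbdd⟩ hm)

lemma nfPos_eq_of (y : ℤ →₀ ℤ) (v m : ℤ) (hm : psum y m = v) (hub : ∀ n, psum y n ≤ v)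
    (hlt : ∀ n, n < m → psum y n < v) : nfPos y = m := by
  have hphi := phi_eq_of y v m hm hub
  have hbdd : ∀ n ∈ {n | psum y n = v}, m ≤ n := by
    intro n hn
    by_contra hc
    push_neg at hc
    exact absurd hn (ne_of_lt (hlt n hc))
  unfold nfPos
  rw [hphi]
  exact le_antisymm (csInf_le ⟨m, hbdd⟩ hm) (le_csInf ⟨m, hm⟩ hbdd)

lemma psum_ftil (y : ℤ →₀ ℤ) (n : ℤ) :
    psum (ftil y) n
      = psum y n - (if nfPos y ≤ n then 1 else 0) - (if nfPos y + 1 ≤ n then 1 else 0) := by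
  unfold ftil
  rw [psum_sub, psum_sub, psum_single, psum_single]

lemma psum_etil (y : ℤ →₀ ℤ) (n : ℤ) :
    psum (etil y) n
      = psum y n + (if nePos y ≤ n then 1 else 0) + (if nePos y + 1 ≤ n then 1 else 0) := by
  unfold etil
  rw [psum_add, psum_add, psum_single, psum_single]

lemma wt_ftil (y : ℤ →₀ ℤ) : wt (ftil y) = wt y - 2 := by
  obtain ⟨b1, hb1⟩ := exists_ge_support (ftil y)
  obtain ⟨b2, hb2⟩ := exists_ge_support y
  set b := max b1 (max b2 (nfPos y + 1)) with hbdef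
  have h1 : wt (ftil y) = psum (ftil y) b :=
    (psum_of_forall_le _ b (fun k hk => le_trans (hb1 k hk) (le_max_left _ _))).symm
  have h2 : psum y b = wt y :=
    psum_of_forall_le _ b
      (fun k hk => le_trans (hb2 k hk) (le_trans (le_max_left _ _) (le_max_right _ _)))
  have hb' : nfPos y + 1 ≤ b := le_trans (le_max_right _ _) (le_max_right _ _)
  rw [h1, psum_ftil, h2, if_pos (by omega : nfPos y ≤ b), if_pos hb']
  ring

lemma wt_etil (y : ℤ →₀ ℤ) : wt (etil y) = wt y + 2 := by
  obtain ⟨b1, hb1⟩ := exists_ge_support (etil y)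
  obtain ⟨b2, hb2⟩ := exists_ge_support y
  set b := max b1 (max b2 (nePos y + 1)) with hbdef
  have h1 : wt (etil y) = psum (etil y) b :=
    (psum_of_forall_le _ b (fun k hk => le_trans (hb1 k hk) (le_max_left _ _))).symm
  have h2 : psum y b = wt y :=
    psum_of_forall_le _ b
      (fun k hk => le_trans (hb2 k hk) (le_trans (le_max_left _ _) (le_max_right _ _)))
  have hb' : nePos y + 1 ≤ b := le_trans (le_max_right _ _) (le_max_right _ _)
  rw [h1, psum_etil, h2, if_pos (by omega : nePos y ≤ b), if_pos hb']
  ring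


/-- Variant monomial operators are mutually inverse: if `φ(y) > 0` then `ε(f̃ y) > 0` and
`ẽ(f̃ y) = y`; if `ε(y) > 0` then `φ(ẽ y) > 0` and `f̃(ẽ y) = y`. -/
theorem stmt8 (y : ℤ →₀ ℤ) :
    (0 < phi y → 0 < eps (ftil y) ∧ etil (ftil y) = y) ∧
    (0 < eps y → 0 < phi (etil y) ∧ ftil (etil y) = y) := by
  constructor
  · intro hphi
    obtain ⟨m0, hm0⟩ := phi_mem y
    obtain ⟨a, ha⟩ := exists_lt_support y
    have hbddB : BddBelow {n | psum y n = phi y} := by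
      refine ⟨a, fun n hn => ?_⟩
      by_contra hc
      push_neg at hc
      have h0 : psum y n = 0 := psum_of_forall_lt y n (fun k hk => lt_trans hc (ha k hk))
      have h1 : psum y n = phi y := hn
      omega
    have hmemA : psum y (nfPos y) = phi y :=
      Int.csInf_mem (⟨m0, hm0⟩ : ({n | psum y n = phi y}).Nonempty) hbddB
    have hltA : ∀ n, n < nfPos y → psum y n < phi y := by
      intro n hn
      rcases lt_or_eq_of_le (psum_le_phi y n) with h | h
      · exact h
      · exfalso
        have : nfPos y ≤ n := csInf_le hbddB (h : psum y n = phi y)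
        omega
    have hm : psum (ftil y) (nfPos y) = phi y - 1 := by
      rw [psum_ftil, hmemA, if_pos le_rfl, if_neg (by omega)]
      omega
    have hub : ∀ n, psum (ftil y) n ≤ phi y - 1 := by
      intro n
      rw [psum_ftil]
      rcases lt_trichotomy n (nfPos y) with h | h | h
      · have := hltA n h
        rw [if_neg (by omega), if_neg (by omega)]
        omega
      · subst h
        rw [if_pos le_rfl, if_neg (by omega), hmemA]
        omega
      · have := psum_le_phi y n
        rw [if_pos (by omega), if_pos (by omega)]
        omega
    have hlt : ∀ n, nfPos y < n → psum (ftil y) n < phi y - 1 := by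
      intro n hn
      rw [psum_ftil, if_pos (by omega), if_pos (by omega)]
      have := psum_le_phi y n
      omega
    have hne : nePos (ftil y) = nfPos y := nePos_eq_of _ _ _ hm hub hlt
    have hphif : phi (ftil y) = phi y - 1 := phi_eq_of _ _ _ hm hub
    constructor
    · rw [eps_eq, hphif, wt_ftil]
      have := wt_le_phi y
      omega
    · unfold etil
      rw [hne]
      unfold ftil
      abel
  · intro heps
    obtain ⟨m0, hm0⟩ := phi_mem y
    obtain ⟨b, hb⟩ := exists_ge_support y
    have hepsv : 0 < phi y - wt y := by rw [← eps_eq]; exact heps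
    have hbddA : BddAbove {n | psum y n = phi y} := by
      refine ⟨b, fun n hn => ?_⟩
      by_contra hc
      push_neg at hc
      have h0 : psum y n = wt y :=
        psum_of_forall_le y n (fun k hk => le_trans (hb k hk) (by omega))
      have h1 : psum y n = phi y := hn
      omega
    have hmemA : psum y (nePos y) = phi y :=
      Int.csSup_mem (⟨m0, hm0⟩ : ({n | psum y n = phi y}).Nonempty) hbddA
    have hltA : ∀ n, nePos y < n → psum y n < phi y := by
      intro n hn
      rcases lt_or_eq_of_le (psum_le_phi y n) with h | h
      · exact h
      · exfalso
        have : n ≤ nePos y := le_csSup hbddA (h : psum y n = phi y)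
        omega
    have hm : psum (etil y) (nePos y) = phi y + 1 := by
      rw [psum_etil, hmemA, if_pos le_rfl, if_neg (by omega)]
      omega
    have hub : ∀ n, psum (etil y) n ≤ phi y + 1 := by
      intro n
      rw [psum_etil]
      rcases lt_trichotomy n (nePos y) with h | h | h
      · have := psum_le_phi y n
        rw [if_neg (by omega), if_neg (by omega)]
        omega
      · subst h
        rw [if_pos le_rfl, if_neg (by omega), hmemA]
        omega
      · have := hltA n h
        rw [if_pos (by omega), if_pos (by omega)]
        omega
    have hlt : ∀ n, n < nePos y → psum (etil y) n < phi y + 1 := by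
      intro n hn
      rw [psum_etil, if_neg (by omega), if_neg (by omega)]
      have := psum_le_phi y n
      omega
    have hnf : nfPos (etil y) = nePos y := nfPos_eq_of _ _ _ hm hub hlt
    have hphie : phi (etil y) = phi y + 1 := phi_eq_of _ _ _ hm hub
    constructor
    · rw [hphie]
      have := phi_nonneg y
      omega
    · unfold ftil
      rw [hnf]
      unfold etil
      abel
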